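/- arXiv:1802.09805 — 2 statements merged into one kernel-verified Lean document; each statement's English description precedes it below -/
import Mathlib

section
/- The number of 321-avoiding involutions in the symmetric group S_n equals the central binomial coefficient C(n, ⌊n/2⌋). -/
/-!
Read `S : Finset (Fin n)` as a lattice path of length `n` with an up-step at each element of `S`
and a down-step elsewhere. For an involution `z` take `S` to be the set of weak excedances
`i ≤ z i`. If `z` avoids 321, its arcs `i < z i` do not nest and no fixed point lies below an
arc, so the path never goes below height `0`. Conversely such a ballot path determines `z`: the
fixed points are the up-steps after which the path never returns to its previous height (the
steps at which the minimum of the future heights increases), and the remaining up-steps are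
matched in order with the down-steps. Counting ballot paths started at height `h` by their first
step gives `N(n + 1, h + 1) = N(n, h + 2) + N(n, h)`, solved by
`N(n, h) = ∑_{j ≤ h} C(n, ⌊(n + j + 1) / 2⌋)`, and `N(n, 0) = C(n, ⌊n / 2⌋)`.
-/

open Finset

variable {n : ℕ}

def prefixCard (S : Finset (Fin n)) (t : ℕ) : ℕ := #(S.filter fun x : Fin n => (x : ℕ) < t)

@[simp] lemma prefixCard_zero (S : Finset (Fin n)) : prefixCard S 0 = 0 := by
  simp [prefixCard]

lemma prefixCard_mono (S : Finset (Fin n)) {t t' : ℕ} (h : t ≤ t') :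
    prefixCard S t ≤ prefixCard S t' :=
  card_le_card <| monotone_filter_right _ fun _ _ ht => ht.trans_le h

lemma prefixCard_eq_card (S : Finset (Fin n)) {t : ℕ} (h : n ≤ t) : prefixCard S t = #S := by
  rw [prefixCard, filter_true_of_mem fun x _ => x.isLt.trans_le h]

lemma prefixCard_succ (S : Finset (Fin n)) (x : Fin n) :
    prefixCard S (x + 1) = prefixCard S x + if x ∈ S then 1 else 0 := by
  have : S.filter (fun y : Fin n => (y : ℕ) < x + 1) =
      S.filter (fun y : Fin n => (y : ℕ) < x) ∪ S.filter (· = x) := by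
    ext y; simp [le_iff_lt_or_eq, and_or_left, Fin.val_inj]
  rw [prefixCard, prefixCard, this, card_union_of_disjoint]
  · split_ifs with hx <;> simp [filter_eq', hx]
  · exact disjoint_filter.2 fun y _ hlt heq => (heq ▸ hlt).false

lemma prefixCard_union {S T : Finset (Fin n)} (h : Disjoint S T) (t : ℕ) :
    prefixCard (S ∪ T) t = prefixCard S t + prefixCard T t := by
  rw [prefixCard, filter_union, card_union_of_disjoint (disjoint_filter_filter h)]
  rfl

lemma eq_of_prefixCard_eq {S T : Finset (Fin n)}
    (h : ∀ t ≤ n, prefixCard S t = prefixCard T t) : S = T := by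
  ext x
  have := h (x + 1) x.isLt
  rw [prefixCard_succ, prefixCard_succ, h x x.isLt.le] at this
  by_cases hS : x ∈ S <;> by_cases hT : x ∈ T <;> simp_all

lemma prefixCard_min (S : Finset (Fin n)) (t : ℕ) : prefixCard S (min t n) = prefixCard S t := by
  rcases le_total t n with h | h
  · rw [min_eq_left h]
  · rw [min_eq_right h, prefixCard_eq_card _ le_rfl, prefixCard_eq_card _ h]

def consPath (b : Bool) (T : Finset (Fin n)) : Finset (Fin (n + 1)) :=
  if b then insert 0 (T.map (Fin.succEmb n)) else T.map (Fin.succEmb n)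

@[simp] lemma zero_mem_consPath {b : Bool} {T : Finset (Fin n)} :
    0 ∈ consPath b T ↔ b = true := by
  cases b <;> simp [consPath, Fin.succ_ne_zero]

@[simp] lemma succ_mem_consPath {b : Bool} {T : Finset (Fin n)} {i : Fin n} :
    i.succ ∈ consPath b T ↔ i ∈ T := by
  cases b <;> simp [consPath, Fin.succ_ne_zero]

lemma compl_consPath (b : Bool) (T : Finset (Fin n)) : (consPath b T)ᶜ = consPath (!b) Tᶜ := by
  ext i; cases i using Fin.cases <;> simp

lemma card_consPath (b : Bool) (T : Finset (Fin n)) : #(consPath b T) = #T + b.toNat := by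
  cases b <;> simp [consPath, Fin.succ_ne_zero]

lemma prefixCard_consPath_succ (b : Bool) (T : Finset (Fin n)) (t : ℕ) :
    prefixCard (consPath b T) (t + 1) = prefixCard T t + b.toNat := by
  have : (consPath b T).filter (fun x : Fin (n + 1) => (x : ℕ) < t + 1) =
      consPath b (T.filter fun x : Fin n => (x : ℕ) < t) := by
    ext i; cases i using Fin.cases <;> simp
  rw [prefixCard, this, card_consPath, prefixCard]

def consPathEquiv : Bool × Finset (Fin n) ≃ Finset (Fin (n + 1)) where
  toFun p := consPath p.1 p.2
  invFun S := (decide (0 ∈ S), univ.filter fun i => i.succ ∈ S)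
  left_inv p := by ext <;> simp
  right_inv S := by ext i; cases i using Fin.cases <;> simp

lemma card_filter_eq_consPath (P : Finset (Fin (n + 1)) → Prop) [DecidablePred P] :
    #{S | P S} = #{T | P (consPath true T)} + #{T | P (consPath false T)} := by
  simp only [card_filter]
  rw [← consPathEquiv.sum_comp, Fintype.sum_prod_type, Fintype.sum_bool]
  rfl

/-- Started at height `h`, the path with up-steps at `S` never goes below `0`. -/
def IsBallot (h : ℕ) (S : Finset (Fin n)) : Prop :=
  ∀ t, prefixCard Sᶜ t ≤ h + prefixCard S t

lemma isBallot_consPath_iff {h : ℕ} {b : Bool} {T : Finset (Fin n)} :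
    IsBallot h (consPath b T) ↔
      ∀ t, prefixCard Tᶜ t + (!b).toNat ≤ h + prefixCard T t + b.toNat := by
  simp only [IsBallot, compl_consPath]
  constructor
  · intro hb t
    simpa [prefixCard_consPath_succ, add_assoc] using hb (t + 1)
  · rintro hb (_ | t)
    · simp
    · simpa [prefixCard_consPath_succ, add_assoc] using hb t

lemma isBallot_consPath_true {h : ℕ} {T : Finset (Fin n)} :
    IsBallot h (consPath true T) ↔ IsBallot (h + 1) T := by
  rw [isBallot_consPath_iff]
  exact forall_congr' fun t => by simp; omega

lemma isBallot_succ_consPath_false {h : ℕ} {T : Finset (Fin n)} :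
    IsBallot (h + 1) (consPath false T) ↔ IsBallot h T := by
  rw [isBallot_consPath_iff]
  exact forall_congr' fun t => by simp; omega

lemma not_isBallot_zero_consPath_false (T : Finset (Fin n)) : ¬ IsBallot 0 (consPath false T) := by
  rw [isBallot_consPath_iff]
  intro hb
  simpa using hb 0

open Classical in
noncomputable def ballotCount (n h : ℕ) : ℕ := #{S : Finset (Fin n) | IsBallot h S}

lemma ballotCount_zero_left (h : ℕ) : ballotCount 0 h = 1 := by
  classical
  rw [ballotCount, filter_true_of_mem fun S _ t => by simp [Subsingleton.elim Sᶜ ∅, prefixCard]]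
  simp

lemma ballotCount_succ_zero : ballotCount (n + 1) 0 = ballotCount n 1 := by
  classical
  rw [ballotCount, card_filter_eq_consPath, ballotCount,
    filter_false_of_mem fun T _ => not_isBallot_zero_consPath_false T, card_empty, add_zero]
  congr 1
  ext T
  simp [isBallot_consPath_true]

lemma ballotCount_succ_succ (h : ℕ) :
    ballotCount (n + 1) (h + 1) = ballotCount n (h + 2) + ballotCount n h := by
  rw [ballotCount, card_filter_eq_consPath, ballotCount, ballotCount]
  congr 2 <;> ext T <;> simp [isBallot_consPath_true, isBallot_succ_consPath_false]

lemma choose_succ_div_two_eq (n : ℕ) : n.choose ((n + 1) / 2) = n.choose (n / 2) := by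
  obtain ⟨m, rfl | rfl⟩ := Nat.even_or_odd' n
  · congr 1; omega
  · rw [show (2 * m + 1 + 1) / 2 = m + 1 by omega, show (2 * m + 1) / 2 = m by omega,
      Nat.choose_symm_half]

lemma ballotCount_eq_sum (n h : ℕ) :
    ballotCount n h = ∑ j ∈ range (h + 1), n.choose ((n + j + 1) / 2) := by
  induction n generalizing h with
  | zero =>
    rw [ballotCount_zero_left, sum_range_succ']
    simp [Nat.choose_eq_zero_of_lt]
  | succ n ih =>
    have pascal (j : ℕ) : (n + 1).choose ((n + 1 + j + 1) / 2) =
        n.choose ((n + j) / 2) + n.choose ((n + (j + 1) + 1) / 2) := by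
      rw [show (n + 1 + j + 1) / 2 = (n + j) / 2 + 1 by omega,
        show (n + (j + 1) + 1) / 2 = (n + j) / 2 + 1 by omega, Nat.choose_succ_succ']
    rcases h with _ | h
    · rw [ballotCount_succ_zero, ih, sum_range_one, sum_range_succ, sum_range_one, pascal 0]
      simp [choose_succ_div_two_eq]
    · rw [ballotCount_succ_succ, ih, ih, sum_range_succ' _ (h + 2), sum_range_succ' _ (h + 1),
        sum_range_succ' _ (h + 1)]
      simp only [pascal, sum_add_distrib]
      rw [pascal 0]
      simp only [add_zero, ← add_assoc, choose_succ_div_two_eq]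
      ring

lemma ballotCount_zero_right (n : ℕ) : ballotCount n 0 = n.choose (n / 2) := by
  rw [ballotCount_eq_sum, sum_range_one, add_zero, choose_succ_div_two_eq]

section FutureMin

def pathHeight (S : Finset (Fin n)) (t : ℕ) : ℤ := prefixCard S t - prefixCard Sᶜ t

lemma pathHeight_succ (S : Finset (Fin n)) (x : Fin n) :
    pathHeight S (x + 1) = pathHeight S x + if x ∈ S then 1 else -1 := by
  rw [pathHeight, pathHeight, prefixCard_succ, prefixCard_succ]
  by_cases hx : x ∈ S <;> simp [hx] <;> ring

def futureMin (S : Finset (Fin n)) (v : ℕ) : ℤ :=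
  (Icc (min v n) n).inf' (nonempty_Icc.2 (min_le_right v n)) (pathHeight S)

variable {S : Finset (Fin n)}

lemma futureMin_le_pathHeight {v t : ℕ} (hvt : v ≤ t) (htn : t ≤ n) :
    futureMin S v ≤ pathHeight S t :=
  inf'_le _ (mem_Icc.2 ⟨(min_le_left v n).trans hvt, htn⟩)

lemma futureMin_length : futureMin S n = pathHeight S n := by
  simp [futureMin]

lemma futureMin_eq_min (x : Fin n) :
    futureMin S x = min (pathHeight S x) (futureMin S (x + 1)) := by
  have hIcc : Icc (min (x : ℕ) n) n = insert (x : ℕ) (Icc (min ((x : ℕ) + 1) n) n) := by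
    rw [min_eq_left x.isLt.le, min_eq_left x.isLt, insert_Icc_add_one_left_eq_Icc x.isLt.le]
  rw [futureMin, inf'_congr _ hIcc fun _ _ => rfl, inf'_insert]
  rfl

lemma futureMin_succ_eq_or (x : Fin n) :
    futureMin S (x + 1) = futureMin S x ∨ futureMin S (x + 1) = futureMin S x + 1 := by
  have hmin := futureMin_eq_min (S := S) x
  have hle := futureMin_le_pathHeight (S := S) (t := x + 1) le_rfl x.isLt
  have hstep := pathHeight_succ S x
  split_ifs at hstep <;> omega

lemma futureMin_zero (hS : IsBallot 0 S) : futureMin S 0 = 0 := by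
  refine le_antisymm ((futureMin_le_pathHeight le_rfl n.zero_le).trans (by simp [pathHeight])) ?_
  refine le_inf' _ _ fun t _ => ?_
  have := hS t
  simp only [pathHeight]
  omega

/-- The up-steps after which the path never returns to its height before the step. -/
def unmatchedRises (S : Finset (Fin n)) : Finset (Fin n) :=
  {x | futureMin S (x + 1) = futureMin S x + 1}

lemma prefixCard_unmatchedRises (hS : IsBallot 0 S) {v : ℕ} (hv : v ≤ n) :
    prefixCard (unmatchedRises S) v = futureMin S v := by
  induction v with
  | zero => simp [futureMin_zero hS]
  | succ v ih =>
    have hstep := prefixCard_succ (unmatchedRises S) ⟨v, hv⟩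
    have hmem : (⟨v, hv⟩ : Fin n) ∈ unmatchedRises S ↔
        futureMin S (v + 1) = futureMin S v + 1 := by
      simp [unmatchedRises]
    have hsucc := futureMin_succ_eq_or (S := S) ⟨v, hv⟩
    have ih := ih (by omega)
    simp only [hmem] at hstep hsucc
    split_ifs at hstep <;> omega

lemma unmatchedRises_subset : unmatchedRises S ⊆ S := by
  intro x hx
  have hmin := futureMin_eq_min (S := S) x
  have hle := futureMin_le_pathHeight (S := S) (t := x + 1) le_rfl x.isLt
  have hstep := pathHeight_succ S x
  simp only [unmatchedRises, mem_filter, mem_univ, true_and] at hx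
  split_ifs at hstep with h
  · exact h
  · omega

lemma pathHeight_eq_futureMin_of_mem_unmatchedRises {x : Fin n} (hx : x ∈ unmatchedRises S) :
    pathHeight S x = futureMin S x := by
  have hmin := futureMin_eq_min (S := S) x
  simp only [unmatchedRises, mem_filter, mem_univ, true_and] at hx
  omega

end FutureMin

def Avoids321 {α β : Type*} [LT α] [LT β] (f : α → β) : Prop :=
  ¬∃ i j k, i < j ∧ j < k ∧ f k < f j ∧ f j < f i

section Avoidance

variable {α : Type*} [LinearOrder α]

lemma avoids321_of_strictMonoOn {f : α → α} {s : Set α} (hs : ∀ x ∈ s, x ≤ f x)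
    (hsc : ∀ x ∉ s, f x < x) (h₁ : StrictMonoOn f s) (h₂ : StrictMonoOn f sᶜ) :
    Avoids321 f := by
  rintro ⟨i, j, k, hij, hjk, hkj, hji⟩
  by_cases hj : j ∈ s
  · by_cases hi : i ∈ s
    · exact (h₁ hi hj hij).not_gt hji
    · exact ((hsc i hi).trans (hij.trans_le (hs j hj))).not_gt hji
  · by_cases hk : k ∈ s
    · exact ((hsc j hj).trans (hjk.trans_le (hs k hk))).not_gt hkj
    · exact (h₂ hj hk hjk).not_gt hkj

variable {z : α → α}

lemma Avoids321.apply_ne_of_lt_of_lt (hz : Function.Involutive z) (h : Avoids321 z) {o x : α}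
    (hox : o < x) (hxo : x < z o) : z x ≠ x := by
  intro hx
  exact h ⟨o, x, z o, hox, hxo, by rwa [hz, hx], by rwa [hx]⟩

lemma Avoids321.strictMonoOn_setOf_le_apply (hz : Function.Involutive z) (h : Avoids321 z) :
    StrictMonoOn z {x | x ≤ z x} := by
  intro i hi j hj hij
  rcases (show i ≤ z i from hi).eq_or_lt with hi | hi
  · exact hi ▸ hij.trans_le hj
  by_contra! hji
  rcases (show j ≤ z j from hj).eq_or_lt with hj | hj
  · rcases (hj.trans_le hji).eq_or_lt with hji | hji
    · exact hij.ne (by rw [← hz i, ← hji, ← hj])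
    · exact h.apply_ne_of_lt_of_lt hz hij hji hj.symm
  · rcases hji.eq_or_lt with hji | hji
    · exact hij.ne (hz.injective hji.symm)
    · exact h ⟨j, z j, z i, hj, hji, by rwa [hz, hz], by rwa [hz]⟩

end Avoidance

section ArcFun

variable {α : Type*} [DecidableEq α] {O D : Finset α}

def arcFun (e : O ≃ D) (x : α) : α :=
  if hx : x ∈ O then e ⟨x, hx⟩ else if hx : x ∈ D then e.symm ⟨x, hx⟩ else x

lemma arcFun_of_mem_left (e : O ≃ D) {x : α} (hx : x ∈ O) : arcFun e x = e ⟨x, hx⟩ :=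
  dif_pos hx

lemma arcFun_of_mem_right (hOD : Disjoint O D) (e : O ≃ D) {x : α} (hx : x ∈ D) :
    arcFun e x = e.symm ⟨x, hx⟩ := by
  rw [arcFun, dif_neg (disjoint_right.1 hOD hx), dif_pos hx]

lemma arcFun_of_notMem (e : O ≃ D) {x : α} (hO : x ∉ O) (hD : x ∉ D) : arcFun e x = x := by
  rw [arcFun, dif_neg hO, dif_neg hD]

lemma arcFun_involutive (hOD : Disjoint O D) (e : O ≃ D) : Function.Involutive (arcFun e) := by
  intro x
  by_cases hO : x ∈ O
  · rw [arcFun_of_mem_left e hO, arcFun_of_mem_right hOD e (e ⟨x, hO⟩).2]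
    simp
  by_cases hD : x ∈ D
  · rw [arcFun_of_mem_right hOD e hD, arcFun_of_mem_left e (e.symm ⟨x, hD⟩).2]
    simp
  · rw [arcFun_of_notMem e hO hD, arcFun_of_notMem e hO hD]

lemma arcFun_subtypeEquiv (z : Equiv.Perm α) (hz : Function.Involutive z)
    (h : ∀ x, x ∈ O ↔ z x ∈ D) (hfix : ∀ x ∉ O, x ∉ D → z x = x) :
    arcFun (z.subtypeEquiv h) = z := by
  ext x
  by_cases hO : x ∈ O
  · rw [arcFun_of_mem_left _ hO]; rfl
  by_cases hD : x ∈ D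
  · rw [arcFun, dif_neg hO, dif_pos hD, Equiv.subtypeEquiv_symm, Equiv.subtypeEquiv_apply]
    exact z.symm_apply_eq.2 (hz x).symm
  · rw [arcFun_of_notMem _ hO hD, hfix x hO hD]

end ArcFun

section Excedances

variable {α : Type*} [Fintype α] [LinearOrder α]

def excedances (z : α → α) : Finset α := {x | x < z x}

def deficiencies (z : α → α) : Finset α := {x | z x < x}

end Excedances

lemma prefixCard_orderIso {O D : Finset (Fin n)} (f : O ≃o D) (o : O) :
    prefixCard D (f o : Fin n) = prefixCard O (o : Fin n) := by
  symm
  refine card_bij' (fun x hx => f ⟨x, (mem_filter.1 hx).1⟩)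
    (fun y hy => f.symm ⟨y, (mem_filter.1 hy).1⟩) (fun x hx => ?_) (fun y hy => ?_)
    (fun _ _ => by simp) (fun _ _ => by simp)
  · exact mem_filter.2
      ⟨(f _).2, f.strictMono (show (⟨x, _⟩ : O) < o from (mem_filter.1 hx).2)⟩
  · exact mem_filter.2
      ⟨(f.symm _).2, f.symm_apply_lt.2 (show (⟨y, _⟩ : D) < f o from (mem_filter.1 hy).2)⟩

/-- Openers `O` and closers `D` such that matching the `k`-th opener with the `k`-th closer gives
arcs that point right and pass over no point outside `O ∪ D`. -/
structure IsArcSystem (O D : Finset (Fin n)) : Prop where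
  disjoint : Disjoint O D
  card_eq : #O = #D
  prefixCard_le : ∀ t, prefixCard D t ≤ prefixCard O t
  prefixCard_eq : ∀ x ∉ O ∪ D, prefixCard O x = prefixCard D x

namespace IsArcSystem

variable {O D : Finset (Fin n)} (h : IsArcSystem O D)
include h

lemma lt_apply (f : O ≃o D) (o : O) : (o : Fin n) < f o := by
  by_contra! hle
  have hlt : (f o : Fin n) < o :=
    hle.lt_of_ne fun heq => disjoint_left.1 h.disjoint (heq ▸ o.2) (f o).2
  have hD := prefixCard_succ D (f o)
  have hO := prefixCard_mono O (show (f o : ℕ) + 1 ≤ (o : ℕ) from hlt)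
  have := h.prefixCard_le ((f o : ℕ) + 1)
  rw [if_pos (f o).2, prefixCard_orderIso] at hD
  omega

lemma apply_lt (f : O ≃o D) {o : O} {x : Fin n} (hx : x ∉ O ∪ D) (hox : (o : Fin n) < x) :
    (f o : Fin n) < x := by
  by_contra! hle
  have hlt : x < f o := hle.lt_of_ne fun heq => hx (mem_union_right _ (heq ▸ (f o).2))
  have hO := prefixCard_succ O o
  have hO' := prefixCard_mono O (show (o : ℕ) + 1 ≤ x from hox)
  have hD := prefixCard_mono D (show (x : ℕ) ≤ (f o : Fin n) from hlt.le)
  have := h.prefixCard_eq x hx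
  rw [if_pos o.2] at hO
  rw [prefixCard_orderIso] at hD
  omega

noncomputable def iso : O ≃o D := (O.orderIsoOfFin h.card_eq).symm.trans (D.orderIsoOfFin rfl)

noncomputable def perm : Equiv.Perm (Fin n) :=
  (arcFun_involutive h.disjoint h.iso.toEquiv).toPerm _

lemma perm_apply (x : Fin n) : h.perm x = arcFun h.iso.toEquiv x := rfl

lemma involutive_perm : Function.Involutive h.perm :=
  Function.Involutive.toPerm_involutive _

lemma perm_lt_of_mem {x : Fin n} (hx : x ∈ D) : h.perm x < x := by
  rw [perm_apply, arcFun_of_mem_right h.disjoint _ hx]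
  simpa using h.lt_apply h.iso (h.iso.symm ⟨x, hx⟩)

lemma le_perm_of_notMem {x : Fin n} (hx : x ∉ D) : x ≤ h.perm x := by
  rw [perm_apply]
  by_cases hO : x ∈ O
  · rw [arcFun_of_mem_left _ hO]
    exact (h.lt_apply h.iso ⟨x, hO⟩).le
  · rw [arcFun_of_notMem _ hO hx]

lemma deficiencies_perm : deficiencies h.perm = D := by
  ext x
  simp only [deficiencies, mem_filter, mem_univ, true_and]
  exact ⟨fun hlt => by_contra fun hx => (h.le_perm_of_notMem hx).not_gt hlt, h.perm_lt_of_mem⟩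

lemma avoids321_perm : Avoids321 h.perm := by
  refine avoids321_of_strictMonoOn (s := ↑Dᶜ) (fun x hx => h.le_perm_of_notMem (mem_compl.1 hx))
    (fun x hx => h.perm_lt_of_mem (by simpa using hx)) ?_ ?_
  · intro x hx y hy hxy
    simp only [coe_compl, Set.mem_compl_iff, mem_coe] at hx hy
    simp only [perm_apply]
    by_cases hxO : x ∈ O <;> by_cases hyO : y ∈ O
    · rw [arcFun_of_mem_left _ hxO, arcFun_of_mem_left _ hyO]
      exact h.iso.strictMono (show (⟨x, hxO⟩ : O) < ⟨y, hyO⟩ from hxy)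
    · rw [arcFun_of_mem_left _ hxO, arcFun_of_notMem _ hyO hy]
      exact h.apply_lt h.iso (by simp [hyO, hy]) hxy
    · rw [arcFun_of_notMem _ hxO hx, arcFun_of_mem_left _ hyO]
      exact hxy.trans (h.lt_apply h.iso ⟨y, hyO⟩)
    · rwa [arcFun_of_notMem _ hxO hx, arcFun_of_notMem _ hyO hy]
  · intro x hx y hy hxy
    simp only [coe_compl, compl_compl, mem_coe] at hx hy
    simp only [perm_apply, arcFun_of_mem_right h.disjoint _ hx, arcFun_of_mem_right h.disjoint _ hy]
    exact h.iso.symm.strictMono (show (⟨x, hx⟩ : D) < ⟨y, hy⟩ from hxy)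


lemma prefixCard_compl (t : ℕ) :
    prefixCard Dᶜ t = prefixCard O t + prefixCard (O ∪ D)ᶜ t := by
  rw [← prefixCard_union
    (disjoint_compl_right.mono_right (compl_subset_compl.2 subset_union_left))]
  congr 1
  ext x
  have : x ∈ O → x ∉ D := fun hx => disjoint_left.1 h.disjoint hx
  simp only [mem_compl, mem_union]
  tauto

lemma isBallot_compl : IsBallot 0 Dᶜ := fun t => by
  rw [compl_compl, h.prefixCard_compl]
  have := h.prefixCard_le t
  omega

/- The height at `t` is the number of points of `(O ∪ D)ᶜ` below `t` plus the number of arcs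
open at `t`, and no arc is open at a point of `(O ∪ D)ᶜ` or at `n`. -/
lemma prefixCard_eq_futureMin {t : ℕ} (ht : t ≤ n) :
    (prefixCard (O ∪ D)ᶜ t : ℤ) = futureMin Dᶜ t := by
  induction ht using Nat.decreasingInduction with
  | self =>
    rw [futureMin_length, pathHeight, compl_compl, h.prefixCard_compl, prefixCard_eq_card O le_rfl,
      prefixCard_eq_card D le_rfl, h.card_eq]
    push_cast
    ring
  | of_succ k hk ih =>
    have hmin := futureMin_eq_min (S := Dᶜ) ⟨k, hk⟩
    have hF := prefixCard_succ (O ∪ D)ᶜ ⟨k, hk⟩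
    have hS := h.prefixCard_compl k
    have hle := h.prefixCard_le k
    simp only [pathHeight, compl_compl] at hmin hF
    by_cases hx : (⟨k, hk⟩ : Fin n) ∈ (O ∪ D)ᶜ
    · have := h.prefixCard_eq ⟨k, hk⟩ (mem_compl.1 hx)
      rw [if_pos hx] at hF
      simp only at this
      omega
    · rw [if_neg hx] at hF
      omega

lemma unmatchedRises_compl : unmatchedRises Dᶜ = (O ∪ D)ᶜ :=
  eq_of_prefixCard_eq fun t ht => by
    have := prefixCard_unmatchedRises h.isBallot_compl ht
    have := h.prefixCard_eq_futureMin ht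
    omega

lemma eq_compl_sdiff_unmatchedRises : O = Dᶜ \ unmatchedRises Dᶜ := by
  rw [h.unmatchedRises_compl]
  ext x
  have : x ∈ O → x ∉ D := fun hx => disjoint_left.1 h.disjoint hx
  simp only [mem_sdiff, mem_compl, mem_union]
  tauto

end IsArcSystem

lemma isArcSystem_of_isBallot {S : Finset (Fin n)} (hS : IsBallot 0 S) :
    IsArcSystem (S \ unmatchedRises S) Sᶜ := by
  have key (t : ℕ) (ht : t ≤ n) :
      (prefixCard (S \ unmatchedRises S) t : ℤ) - prefixCard Sᶜ t =
        pathHeight S t - futureMin S t := by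
    have hsplit := prefixCard_union (sdiff_disjoint : Disjoint (S \ unmatchedRises S) _) t
    rw [sdiff_union_of_subset unmatchedRises_subset] at hsplit
    have := prefixCard_unmatchedRises hS ht
    simp only [pathHeight]
    omega
  refine ⟨disjoint_compl_right.mono_left sdiff_subset, ?_, fun t => ?_, fun x hx => ?_⟩
  · have := key n le_rfl
    rw [futureMin_length] at this
    rw [← prefixCard_eq_card _ le_rfl, ← prefixCard_eq_card Sᶜ le_rfl]
    omega
  · have := key _ (min_le_right t n)
    have := futureMin_le_pathHeight (S := S) le_rfl (min_le_right t n)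
    rw [← prefixCard_min (S \ unmatchedRises S) t, ← prefixCard_min Sᶜ t]
    omega
  · have hxU : x ∈ unmatchedRises S := by
      simp only [mem_union, mem_sdiff, mem_compl] at hx
      tauto
    have := key x x.isLt.le
    have := pathHeight_eq_futureMin_of_mem_unmatchedRises hxU
    omega

section Involution

variable {z : Equiv.Perm (Fin n)}

lemma mem_excedances_iff_apply_mem_deficiencies (hz : Function.Involutive z) (x : Fin n) :
    x ∈ excedances z ↔ z x ∈ deficiencies z := by
  simp [excedances, deficiencies, hz x]

lemma prefixCard_deficiencies_le (hz : Function.Involutive z) (t : ℕ) :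
    prefixCard (deficiencies z) t ≤ prefixCard (excedances z) t := by
  refine card_le_card_of_injOn z (fun x hx => ?_) z.injective.injOn
  simp only [coe_filter, deficiencies, excedances, mem_filter, mem_univ, true_and] at hx ⊢
  exact ⟨by rw [hz]; exact hx.1, (Fin.lt_def.1 hx.1).trans hx.2⟩

lemma isArcSystem_excedances_deficiencies (hz : Function.Involutive z) (h : Avoids321 z) :
    IsArcSystem (excedances z) (deficiencies z) := by
  refine ⟨?_, ?_, prefixCard_deficiencies_le hz, fun x hx => ?_⟩
  · exact disjoint_filter.2 fun x _ h₁ h₂ => h₁.asymm h₂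
  · refine card_nbij' z z (fun x hx => ?_) (fun x hx => ?_) (fun x _ => hz x) (fun x _ => hz x)
    · simpa using (mem_excedances_iff_apply_mem_deficiencies hz x).1 (by simpa using hx)
    · simpa [mem_excedances_iff_apply_mem_deficiencies hz, hz x] using hx
  · have hfix : z x = x := by
      simp only [mem_union, excedances, deficiencies, mem_filter, mem_univ, true_and, not_or,
        not_lt] at hx
      exact le_antisymm hx.1 hx.2
    refine le_antisymm (card_le_card_of_injOn z (fun o ho => ?_) z.injective.injOn)
      (prefixCard_deficiencies_le hz x)
    simp only [coe_filter, deficiencies, excedances, mem_filter, mem_univ, true_and] at ho ⊢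
    refine ⟨by rw [hz]; exact ho.1, ?_⟩
    by_contra! hxz
    rcases (show x ≤ z o from hxz).eq_or_lt with heq | hlt
    · exact ho.2.ne (by rw [← hz o, ← heq, hfix])
    · exact h.apply_ne_of_lt_of_lt hz ho.2 hlt hfix

/- `z` is increasing on its excedances, so it restricts to the unique order isomorphism
`excedances z ≃o deficiencies z`. -/
lemma eq_arcFun (hz : Function.Involutive z) (h : Avoids321 z) {O D : Finset (Fin n)}
    (hO : excedances z = O) (hD : deficiencies z = D) (f : O ≃o D) : ⇑z = arcFun f.toEquiv := by
  subst hO hD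
  set e := z.subtypeEquiv (mem_excedances_iff_apply_mem_deficiencies hz)
  have he : StrictMono e := fun x y hxy =>
    h.strictMonoOn_setOf_le_apply hz (le_of_lt (by simpa [excedances] using x.2))
      (le_of_lt (by simpa [excedances] using y.2)) hxy
  have hf : f.toEquiv = e := by
    rw [Subsingleton.elim f (he.orderIsoOfSurjective e e.surjective)]
    exact Equiv.ext fun _ => rfl
  rw [hf, arcFun_subtypeEquiv z hz]
  intro x hO hD
  simp only [excedances, deficiencies, mem_filter, mem_univ, true_and, not_lt] at hO hD
  exact le_antisymm hO hD

lemma eq_of_deficiencies_eq {z' : Equiv.Perm (Fin n)} (hz : Function.Involutive z)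
    (h : Avoids321 z) (hz' : Function.Involutive z') (h' : Avoids321 z')
    (hD : deficiencies z = deficiencies z') : z = z' := by
  have hA := isArcSystem_excedances_deficiencies hz h
  have hA' := isArcSystem_excedances_deficiencies hz' h'
  have hO : excedances z = excedances z' := by
    rw [hA.eq_compl_sdiff_unmatchedRises, hA'.eq_compl_sdiff_unmatchedRises, hD]
  let f := hA'.iso
  exact DFunLike.coe_injective ((eq_arcFun hz h hO hD f).trans (eq_arcFun hz' h' rfl rfl f).symm)

end Involution

theorem ncard_involutive_avoids321 (n : ℕ) :
    {z : Equiv.Perm (Fin n) | Function.Involutive z ∧ Avoids321 z}.ncard = ballotCount n 0 := by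
  classical
  rw [ballotCount, ← Set.ncard_coe_finset, coe_filter]
  refine Set.ncard_congr (fun z _ => (deficiencies z)ᶜ) ?_ ?_ ?_
  · rintro z ⟨hz, h⟩
    exact ⟨mem_univ _, (isArcSystem_excedances_deficiencies hz h).isBallot_compl⟩
  · rintro z z' ⟨hz, h⟩ ⟨hz', h'⟩ hD
    exact eq_of_deficiencies_eq hz h hz' h' (compl_inj_iff.1 hD)
  · rintro S ⟨-, hS⟩
    have hA := isArcSystem_of_isBallot hS
    exact ⟨hA.perm, ⟨hA.involutive_perm, hA.avoids321_perm⟩,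
      by rw [hA.deficiencies_perm, compl_compl]⟩

/-- The number of 321-avoiding involutions in the symmetric group `S_n`
equals the central binomial coefficient `C(n, ⌊n/2⌋)`. -/
theorem stmt_15 (n : ℕ) :
    {z : Equiv.Perm (Fin n) | z * z = 1 ∧
      ¬∃ i j k : Fin n, i < j ∧ j < k ∧ z k < z j ∧ z j < z i}.ncard
    = Nat.choose n (n / 2) := by
  have hset : {z : Equiv.Perm (Fin n) | z * z = 1 ∧
      ¬∃ i j k : Fin n, i < j ∧ j < k ∧ z k < z j ∧ z j < z i} =
      {z : Equiv.Perm (Fin n) | Function.Involutive z ∧ Avoids321 z} := by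
    ext z
    simp [Equiv.ext_iff, Function.Involutive, Avoids321]
  rw [hset, ncard_involutive_avoids321, ballotCount_zero_right]
end

section
/- Let z be a 'doubly-nonnesting' involution in W_n (at most one negated point, and no two 2-element orbits {a,d},{b,c} in [±n] with −d ≠ a < b ≤ c < d). If z(r) < −r for some r ∈ [n], then r ≤ ⌊n/2⌋. -/
/-- The hyperoctahedral group `W_n`: bijections `w` of `ℤ` with `w (-i) = -(w i)` for
all `i`, fixing every `i` with `|i| > n`.  This is the group of signed permutations of
`[±n] = {-n, …, -1, 1, …, n}`. -/
def WB (n : ℕ) : Subgroup (Equiv.Perm ℤ) where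
  carrier := {w | (∀ i : ℤ, w (-i) = -(w i)) ∧ ∀ i : ℤ, (n : ℤ) < |i| → w i = i}
  one_mem' := by
    constructor <;> intro i <;> simp
  mul_mem' := by
    rintro u v ⟨hu1, hu2⟩ ⟨hv1, hv2⟩
    constructor
    · intro i
      simp only [Equiv.Perm.mul_apply, hv1, hu1]
    · intro i hi
      simp only [Equiv.Perm.mul_apply, hv2 i hi, hu2 i hi]
  inv_mem' := by
    rintro w ⟨h1, h2⟩
    constructor
    · intro i
      apply w.injective
      rw [Equiv.Perm.coe_inv, Equiv.apply_symm_apply, h1, Equiv.apply_symm_apply]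
    · intro i hi
      apply w.injective
      rw [Equiv.Perm.coe_inv, Equiv.apply_symm_apply, h2 i hi]

/-- The set `[±n] = {-n, …, -1, 1, …, n}`. -/
def pmSet (n : ℕ) : Set ℤ := {i | i ≠ 0 ∧ |i| ≤ (n : ℤ)}

/-- An involution `z ∈ W_n` is *doubly-nonnesting* if (i) it has at most one negated
point (`i ∈ [n]` with `z(i) = -i`), and (ii) there are no two orbits `{a,d}`, `{b,c}`
of `z` in `[±n]` with `a < b ≤ c < d` and `a ≠ -d` (so `{a,d}` is a 2-element orbit,
and `{b,c}` is an orbit written with `b ≤ c`). -/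
def DNN (n : ℕ) (z : WB n) : Prop :=
  {i : ℤ | 1 ≤ i ∧ i ≤ (n : ℤ) ∧ (z : Equiv.Perm ℤ) i = -i}.ncard ≤ 1 ∧
  ¬∃ a b c d : ℤ, a ∈ pmSet n ∧ b ∈ pmSet n ∧ c ∈ pmSet n ∧ d ∈ pmSet n ∧
    (z : Equiv.Perm ℤ) a = d ∧ (z : Equiv.Perm ℤ) b = c ∧
    a < b ∧ b ≤ c ∧ c < d ∧ a ≠ -d

/-! The orbit `{z r, r}` with `z r < -r` encloses `[-r, r]`, so by non-nesting no orbit through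
`[1, r]` stays inside `[-r, r]`: every `i ∈ [1, r]` has `r < |z i| ≤ n`. As `z` is a signed
permutation, `i ↦ |z i|` is injective on positive integers, whence `r ≤ n - r`. -/

theorem mem_pmSet_of_one_le {n : ℕ} {i : ℤ} (h1 : 1 ≤ i) (h2 : i ≤ n) : i ∈ pmSet n :=
  ⟨by omega, by rwa [abs_of_pos (by omega)]⟩

namespace WB

variable {n : ℕ} (z : WB n)

theorem apply_neg (i : ℤ) : (z : Equiv.Perm ℤ) (-i) = -(z : Equiv.Perm ℤ) i :=
  z.2.1 i

theorem apply_of_lt_abs {i : ℤ} (hi : (n : ℤ) < |i|) : (z : Equiv.Perm ℤ) i = i :=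
  z.2.2 i hi

theorem apply_zero : (z : Equiv.Perm ℤ) 0 = 0 := by
  have := apply_neg z 0
  rw [neg_zero] at this
  omega

theorem apply_mem_pmSet {i : ℤ} (hi : i ∈ pmSet n) : (z : Equiv.Perm ℤ) i ∈ pmSet n := by
  refine ⟨fun h0 => hi.1 ((z : Equiv.Perm ℤ).injective (h0.trans (apply_zero z).symm)), ?_⟩
  by_contra! hlt
  have hfix := apply_of_lt_abs z hlt
  rw [(z : Equiv.Perm ℤ).injective hfix] at hlt
  exact hlt.not_ge hi.2

theorem injOn_abs_apply : Set.InjOn (fun i => |(z : Equiv.Perm ℤ) i|) (Set.Ioi 0) := by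
  intro i hi j hj hij
  rcases abs_eq_abs.mp hij with h | h
  · exact (z : Equiv.Perm ℤ).injective h
  · rw [← apply_neg] at h
    have := (z : Equiv.Perm ℤ).injective h
    simp only [Set.mem_Ioi] at hi hj
    omega

theorem involutive_of_mul_self_eq_one (hz : z * z = 1) :
    Function.Involutive (z : Equiv.Perm ℤ) := fun i => by
  simpa using congrArg (fun w : WB n => (w : Equiv.Perm ℤ) i) hz

end WB

namespace DNN

variable {n : ℕ} {z : WB n}

/-- Unlike in `DNN`, the inner orbit `{b, z b}` need not be listed in increasing order. -/
theorem not_nested (hdnn : DNN n z) (hinv : Function.Involutive (z : Equiv.Perm ℤ))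
    {a b : ℤ} (ha : a ∈ pmSet n) (hb : b ∈ pmSet n) (hself : a ≠ -(z : Equiv.Perm ℤ) a)
    (hab : a < b) (hazb : a < (z : Equiv.Perm ℤ) b) (hba : b < (z : Equiv.Perm ℤ) a)
    (hzba : (z : Equiv.Perm ℤ) b < (z : Equiv.Perm ℤ) a) : False := by
  have hzb := WB.apply_mem_pmSet z hb
  apply hdnn.2
  rcases le_total b ((z : Equiv.Perm ℤ) b) with hle | hle
  · exact ⟨a, b, _, _, ha, hb, hzb, WB.apply_mem_pmSet z ha, rfl, rfl, hab, hle, hzba, hself⟩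
  · exact ⟨a, _, b, _, ha, hzb, hb, WB.apply_mem_pmSet z ha, rfl, hinv b, hazb, hle, hba, hself⟩

theorem lt_abs_apply (hdnn : DNN n z) (hinv : Function.Involutive (z : Equiv.Perm ℤ))
    {r : ℤ} (hr : r ∈ pmSet n) (h : (z : Equiv.Perm ℤ) r < -r)
    {i : ℤ} (hi1 : 1 ≤ i) (hir : i ≤ r) : r < |(z : Equiv.Perm ℤ) i| := by
  by_contra! hle
  rw [abs_le] at hle
  have hzi_ne : (z : Equiv.Perm ℤ) i ≠ r := fun he => by
    have := congrArg (z : Equiv.Perm ℤ) he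
    rw [hinv i] at this
    omega
  have hi_ne : i ≠ r := by rintro rfl; omega
  refine not_nested hdnn hinv (b := i) (WB.apply_mem_pmSet z hr) ⟨by omega, ?_⟩ ?_ ?_ ?_ ?_ ?_
  · rw [abs_of_pos (by omega)]; exact hir.trans (abs_le.mp hr.2).2
  all_goals have := hinv r; omega

end DNN

/-- Let `z` be a doubly-nonnesting involution in `W_n`.  If
`z(r) < -r` for some `r ∈ [n]`, then `r ≤ ⌊n/2⌋`. -/
theorem stmt_18 (n r : ℕ) (z : WB n) (hz : z * z = 1) (hdnn : DNN n z)
    (hr1 : 1 ≤ r) (hr2 : r ≤ n) (h : (z : Equiv.Perm ℤ) (r : ℤ) < -(r : ℤ)) :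
    r ≤ n / 2 := by
  have hinv := WB.involutive_of_mul_self_eq_one z hz
  have hr : (r : ℤ) ∈ pmSet n := mem_pmSet_of_one_le (by omega) (by omega)
  have hmaps : Set.MapsTo (fun i => |(z : Equiv.Perm ℤ) i|)
      (Finset.Icc 1 (r : ℤ)) (Finset.Icc ((r : ℤ) + 1) n) := by
    intro i hi
    simp only [Finset.coe_Icc, Set.mem_Icc] at hi ⊢
    have hi_mem : i ∈ pmSet n := mem_pmSet_of_one_le hi.1 (by omega)
    exact ⟨DNN.lt_abs_apply hdnn hinv hr h hi.1 hi.2, (WB.apply_mem_pmSet z hi_mem).2⟩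
  have hinj : Set.InjOn (fun i => |(z : Equiv.Perm ℤ) i|) (Finset.Icc 1 (r : ℤ)) :=
    (WB.injOn_abs_apply z).mono fun i hi => by
      simp only [Finset.coe_Icc, Set.mem_Icc] at hi
      exact hi.1
  have hcard := Finset.card_le_card_of_injOn _ hmaps hinj
  rw [Int.card_Icc, Int.card_Icc] at hcard
  omega
end
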